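/- Let A be the generator of an irreducible continuous-time Markov chain on the finite set S = {1, …, n} with unique invariant probability measure μ of full support, and let κ, λ, γ > 0 and v : S → ℝ. Define for probability vectors ξ on S: I_e^A(ξ) = sup { −Σ_i ξ_i (A u)_i / u_i : u_i > 0 for all i }, I_e^{sym}(ξ) = ⟨u, −A u⟩_μ with u_i = √(ξ_i/μ_i), and φ_ξ(α) = Σ_i ξ_i exp(α v_i). Define the free energy functions F^A(α) = 2κ(cosh α − 1) + sup_ξ ( λ(φ_ξ(α) − 1) − γ I_e^A(ξ) ) and F^{sym}(α) = 2κ(cosh α − 1) + sup_ξ ( λ(φ_ξ(α) − 1) − γ I_e^{sym}(ξ) ), the suprema running over probability vectors ξ on S. Then F^A(α) ≤ F^{sym}(α) for every α ∈ ℝ. -/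

import Mathlib

/-!
The symmetric rate function is the Dirichlet form `⟨u, -A u⟩_μ` at `u = √(ξ/μ)`, and feeding the
positive test functions `√(ξ/μ) + ε` into the Donsker–Varadhan variational formula shows, as
`ε → 0⁺`, that it never exceeds `I_e^A(ξ)`. Hence every candidate value in the supremum defining
`F^A(α)` is dominated by the corresponding one for `F^{sym}(α)`; the latter supremum is finite
because the Dirichlet form of a generator with invariant measure `μ` is nonnegative.
-/

open Matrix Finset

section Generator

variable {ι : Type*} [Fintype ι] {A : Matrix ι ι ℝ} {μ : ι → ℝ}

noncomputable def dirichletForm (A : Matrix ι ι ℝ) (μ u : ι → ℝ) : ℝ :=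
  ∑ i, μ i * u i * (-(A *ᵥ u) i)

/-- The Donsker–Varadhan functional whose supremum over `u > 0` is `I_e^A(ξ)`. -/
noncomputable def dvFunctional (A : Matrix ι ι ℝ) (ξ u : ι → ℝ) : ℝ :=
  -∑ i, ξ i * (A *ᵥ u) i / u i

theorem sum_sum_mul_sub_sq_eq_two_mul_dirichletForm (hA_row : ∀ i, ∑ j, A i j = 0)
    (hμ_inv : ∀ j, ∑ i, μ i * A i j = 0) (u : ι → ℝ) :
    ∑ i, ∑ j, μ i * A i j * (u i - u j) ^ 2 = 2 * dirichletForm A μ u := by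
  have h_left : ∑ i, ∑ j, μ i * A i j * u i ^ 2 = 0 := by
    refine sum_eq_zero fun i _ => ?_
    rw [← sum_mul, ← mul_sum, hA_row, mul_zero, zero_mul]
  have h_right : ∑ i, ∑ j, μ i * A i j * u j ^ 2 = 0 := by
    rw [sum_comm]
    simp_rw [← sum_mul, hμ_inv, zero_mul, sum_const_zero]
  have h_cross : ∑ i, ∑ j, μ i * A i j * (u i * u j) = -dirichletForm A μ u := by
    have h_mulVec : ∀ i, (A *ᵥ u) i = ∑ j, A i j * u j := fun i => rfl
    simp only [dirichletForm, h_mulVec, mul_neg, sum_neg_distrib, neg_neg, mul_sum]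
    exact sum_congr rfl fun i _ => sum_congr rfl fun j _ => by ring
  calc ∑ i, ∑ j, μ i * A i j * (u i - u j) ^ 2
      = ∑ i, ∑ j, μ i * A i j * u i ^ 2 + ∑ i, ∑ j, μ i * A i j * u j ^ 2
          - 2 * ∑ i, ∑ j, μ i * A i j * (u i * u j) := by
        simp_rw [mul_sum, ← sum_add_distrib, ← sum_sub_distrib]
        exact sum_congr rfl fun i _ => sum_congr rfl fun j _ => by ring
    _ = 2 * dirichletForm A μ u := by rw [h_left, h_right, h_cross]; ring

theorem dirichletForm_nonneg (hA_off : ∀ i j, i ≠ j → 0 ≤ A i j) (hA_row : ∀ i, ∑ j, A i j = 0)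
    (hμ_nonneg : ∀ i, 0 ≤ μ i) (hμ_inv : ∀ j, ∑ i, μ i * A i j = 0) (u : ι → ℝ) :
    0 ≤ dirichletForm A μ u := by
  have h_sum_nonneg : 0 ≤ ∑ i, ∑ j, μ i * A i j * (u i - u j) ^ 2 := by
    refine sum_nonneg fun i _ => sum_nonneg fun j _ => ?_
    obtain rfl | hij := eq_or_ne i j
    · simp
    · exact mul_nonneg (mul_nonneg (hμ_nonneg i) (hA_off i j hij)) (sq_nonneg _)
  linarith [sum_sum_mul_sub_sq_eq_two_mul_dirichletForm hA_row hμ_inv u]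

theorem diag_mul_le_mulVec (hA_off : ∀ i j, i ≠ j → 0 ≤ A i j) {u : ι → ℝ}
    (hu : ∀ i, 0 ≤ u i) (i : ι) : A i i * u i ≤ (A *ᵥ u) i := by
  classical
  rw [mulVec, dotProduct, ← add_sum_erase _ _ (mem_univ i), le_add_iff_nonneg_right]
  exact sum_nonneg fun j hj => mul_nonneg (hA_off i j (ne_of_mem_erase hj).symm) (hu j)

theorem bddAbove_dvFunctional (hA_off : ∀ i j, i ≠ j → 0 ≤ A i j) {ξ : ι → ℝ}
    (hξ : ∀ i, 0 ≤ ξ i) :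
    BddAbove {x | ∃ u : ι → ℝ, (∀ i, 0 < u i) ∧ x = dvFunctional A ξ u} := by
  refine ⟨-∑ i, ξ i * A i i, ?_⟩
  rintro _ ⟨u, hu, rfl⟩
  refine neg_le_neg (sum_le_sum fun i _ => ?_)
  rw [mul_div_assoc]
  exact mul_le_mul_of_nonneg_left
    ((le_div_iff₀ (hu i)).2 (diag_mul_le_mulVec hA_off (fun j => (hu j).le) i)) (hξ i)

/-- The terms with `ξ i = 0` vanish whatever the (junk) value of the quotient, so only the `i`
with `u i ≠ 0` matter. -/
theorem continuousAt_dvFunctional_add_const {ξ u : ι → ℝ} (h : ∀ i, u i = 0 → ξ i = 0) :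
    ContinuousAt (fun ε : ℝ => dvFunctional A ξ fun j => u j + ε) 0 := by
  refine (tendsto_finsetSum _ fun i _ => ?_).neg
  by_cases hξi : ξ i = 0
  · simp only [hξi, zero_mul, zero_div]
    exact tendsto_const_nhds
  have h_num : Continuous fun ε : ℝ => ξ i * (A *ᵥ fun j => u j + ε) i := by
    simp only [mulVec, dotProduct]
    fun_prop
  exact h_num.continuousAt.div (continuous_const_add (u i)).continuousAt
    (by simpa using mt (h i) hξi)

theorem div_sqrt_div (a : ℝ) {b : ℝ} (hb : b ≠ 0) : a / √(a / b) = b * √(a / b) := by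
  conv_rhs => rw [← Real.div_sqrt, ← mul_div_assoc, mul_div_cancel₀ a hb]

theorem dvFunctional_sqrt_div_eq_dirichletForm (hμ_pos : ∀ i, 0 < μ i) (ξ : ι → ℝ) :
    dvFunctional A ξ (fun j => √(ξ j / μ j)) = dirichletForm A μ (fun j => √(ξ j / μ j)) := by
  rw [dvFunctional, ← sum_neg_distrib]
  refine sum_congr rfl fun i _ => ?_
  rw [mul_div_right_comm, div_sqrt_div _ (hμ_pos i).ne']
  ring

theorem dirichletForm_sqrt_div_le_sSup_dvFunctional (hA_off : ∀ i j, i ≠ j → 0 ≤ A i j)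
    (hμ_pos : ∀ i, 0 < μ i) {ξ : ι → ℝ} (hξ : ∀ i, 0 ≤ ξ i) :
    dirichletForm A μ (fun j => √(ξ j / μ j)) ≤
      sSup {x | ∃ u : ι → ℝ, (∀ i, 0 < u i) ∧ x = dvFunctional A ξ u} := by
  have h_zero : ∀ i, √(ξ i / μ i) = 0 → ξ i = 0 := fun i hi =>
    le_antisymm (by simpa using (div_le_iff₀ (hμ_pos i)).1 (Real.sqrt_eq_zero'.1 hi)) (hξ i)
  have h_lim := ((continuousAt_dvFunctional_add_const (A := A) h_zero).tendsto).mono_left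
    (nhdsWithin_le_nhds (s := Set.Ioi 0))
  simp only [add_zero, dvFunctional_sqrt_div_eq_dirichletForm hμ_pos ξ] at h_lim
  refine le_of_tendsto h_lim ?_
  filter_upwards [self_mem_nhdsWithin] with ε hε
  exact le_csSup (bddAbove_dvFunctional hA_off hξ)
    ⟨_, fun j => add_pos_of_nonneg_of_pos (Real.sqrt_nonneg _) hε, rfl⟩

end Generator

theorem sum_mul_le_sum_of_mem_stdSimplex {ι : Type*} [Fintype ι] {ξ e : ι → ℝ}
    (hξ : ξ ∈ stdSimplex ℝ ι) (he : ∀ i, 0 ≤ e i) : ∑ i, ξ i * e i ≤ ∑ i, e i :=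
  sum_le_sum fun i _ => mul_le_of_le_one_left (he i) (mem_Icc_of_mem_stdSimplex hξ i).2

theorem free_energy_reversible_max_general
    {n : ℕ}
    (A : Matrix (Fin n) (Fin n) ℝ) (μ : Fin n → ℝ)
    (κ lam γ : ℝ) (hlam : 0 < lam) (hγ : 0 < γ)
    (v : Fin n → ℝ)
    -- A is a Markov generator
    (hA_off : ∀ i j, i ≠ j → 0 ≤ A i j)
    (hA_row : ∀ i, ∑ j, A i j = 0)
    -- μ is a probability measure with full support, invariant for A
    (hμ_pos : ∀ i, 0 < μ i)
    (hμ_sum : ∑ i, μ i = 1)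
    (hμ_inv : ∀ j, ∑ i, μ i * A i j = 0)
    -- the Donsker–Varadhan rate function of A
    (IeA : (Fin n → ℝ) → ℝ)
    (hIeA : ∀ ξ, IeA ξ = sSup {x : ℝ | ∃ u : Fin n → ℝ, (∀ i, 0 < u i) ∧
      x = -∑ i, ξ i * (A *ᵥ u) i / u i})
    -- the Donsker–Varadhan rate function of sym(A): ⟨u, -Au⟩_μ with u_i = √(ξ_i/μ_i)
    (IeSym : (Fin n → ℝ) → ℝ)
    (hIeSym : ∀ ξ, IeSym ξ = ∑ i, μ i * Real.sqrt (ξ i / μ i) *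
      (-(A *ᵥ fun j => Real.sqrt (ξ j / μ j)) i))
    -- the moment generating function of v under ξ
    (φ : (Fin n → ℝ) → ℝ → ℝ)
    (hφ : ∀ ξ α, φ ξ α = ∑ i, ξ i * Real.exp (α * v i))
    -- the two free energy functions
    (FA Fsym : ℝ → ℝ)
    (hFA : ∀ α, FA α = 2 * κ * (Real.cosh α - 1) +
      sSup {y : ℝ | ∃ ξ : Fin n → ℝ, (∀ i, 0 ≤ ξ i) ∧ (∑ i, ξ i = 1) ∧
        y = lam * (φ ξ α - 1) - γ * IeA ξ})
    (hFsym : ∀ α, Fsym α = 2 * κ * (Real.cosh α - 1) +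
      sSup {y : ℝ | ∃ ξ : Fin n → ℝ, (∀ i, 0 ≤ ξ i) ∧ (∑ i, ξ i = 1) ∧
        y = lam * (φ ξ α - 1) - γ * IeSym ξ}) :
    ∀ α : ℝ, FA α ≤ Fsym α := by
  intro α
  have h_sym_le : ∀ ξ, (∀ i, 0 ≤ ξ i) → IeSym ξ ≤ IeA ξ := fun ξ hξ => by
    rw [hIeSym, hIeA]
    exact dirichletForm_sqrt_div_le_sSup_dvFunctional hA_off hμ_pos hξ
  have h_bdd : BddAbove {y : ℝ | ∃ ξ : Fin n → ℝ, (∀ i, 0 ≤ ξ i) ∧ (∑ i, ξ i = 1) ∧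
      y = lam * (φ ξ α - 1) - γ * IeSym ξ} := by
    refine ⟨lam * (∑ i, Real.exp (α * v i) - 1), ?_⟩
    rintro _ ⟨ξ, hξ, hξ_sum, rfl⟩
    have h_sym_nonneg : 0 ≤ IeSym ξ := by
      rw [hIeSym]
      exact dirichletForm_nonneg hA_off hA_row (fun i => (hμ_pos i).le) hμ_inv _
    have h_φ_le : φ ξ α ≤ ∑ i, Real.exp (α * v i) := by
      rw [hφ]
      exact sum_mul_le_sum_of_mem_stdSimplex ⟨hξ, hξ_sum⟩ fun i => (Real.exp_pos _).le
    linarith [mul_nonneg hγ.le h_sym_nonneg,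
      mul_le_mul_of_nonneg_left (sub_le_sub_right h_φ_le 1) hlam.le]
  rw [hFA α, hFsym α, add_le_add_iff_left]
  refine csSup_le ⟨_, μ, fun i => (hμ_pos i).le, hμ_sum, rfl⟩ ?_
  rintro _ ⟨ξ, hξ, hξ_sum, rfl⟩
  refine le_trans ?_ (le_csSup h_bdd ⟨ξ, hξ, hξ_sum, rfl⟩)
  exact sub_le_sub_left (mul_le_mul_of_nonneg_left (h_sym_le ξ hξ) hγ.le) _

/-- The large deviation free energy of the active particle with state process
generated by `A` is dominated pointwise by the free energy with state process generated by
the symmetric part of `A`: `F^A(α) ≤ F^{sym}(α)` for all `α ∈ ℝ`. -/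
theorem free_energy_reversible_max
    {n : ℕ} (hn : 0 < n)
    (A : Matrix (Fin n) (Fin n) ℝ) (μ : Fin n → ℝ)
    (κ lam γ : ℝ) (hκ : 0 < κ) (hlam : 0 < lam) (hγ : 0 < γ)
    (v : Fin n → ℝ)
    -- A is a Markov generator
    (hA_off : ∀ i j, i ≠ j → 0 ≤ A i j)
    (hA_row : ∀ i, ∑ j, A i j = 0)
    -- μ is a probability measure with full support, invariant for A
    (hμ_pos : ∀ i, 0 < μ i)
    (hμ_sum : ∑ i, μ i = 1)
    (hμ_inv : ∀ j, ∑ i, μ i * A i j = 0)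
    -- irreducibility/ergodicity: the kernel of A consists of the constant functions
    (h_erg : ∀ f : Fin n → ℝ, A *ᵥ f = 0 → ∃ c : ℝ, ∀ i, f i = c)
    -- the Donsker–Varadhan rate function of A
    (IeA : (Fin n → ℝ) → ℝ)
    (hIeA : ∀ ξ, IeA ξ = sSup {x : ℝ | ∃ u : Fin n → ℝ, (∀ i, 0 < u i) ∧
      x = -∑ i, ξ i * (A *ᵥ u) i / u i})
    -- the Donsker–Varadhan rate function of sym(A): ⟨u, -Au⟩_μ with u_i = √(ξ_i/μ_i)
    (IeSym : (Fin n → ℝ) → ℝ)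
    (hIeSym : ∀ ξ, IeSym ξ = ∑ i, μ i * Real.sqrt (ξ i / μ i) *
      (-(A *ᵥ fun j => Real.sqrt (ξ j / μ j)) i))
    -- the moment generating function of v under ξ
    (φ : (Fin n → ℝ) → ℝ → ℝ)
    (hφ : ∀ ξ α, φ ξ α = ∑ i, ξ i * Real.exp (α * v i))
    -- the two free energy functions
    (FA Fsym : ℝ → ℝ)
    (hFA : ∀ α, FA α = 2 * κ * (Real.cosh α - 1) +
      sSup {y : ℝ | ∃ ξ : Fin n → ℝ, (∀ i, 0 ≤ ξ i) ∧ (∑ i, ξ i = 1) ∧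
        y = lam * (φ ξ α - 1) - γ * IeA ξ})
    (hFsym : ∀ α, Fsym α = 2 * κ * (Real.cosh α - 1) +
      sSup {y : ℝ | ∃ ξ : Fin n → ℝ, (∀ i, 0 ≤ ξ i) ∧ (∑ i, ξ i = 1) ∧
        y = lam * (φ ξ α - 1) - γ * IeSym ξ}) :
    ∀ α : ℝ, FA α ≤ Fsym α :=
  free_energy_reversible_max_general A μ κ lam γ hlam hγ v hA_off hA_row hμ_pos hμ_sum hμ_inv IeA
    hIeA IeSym hIeSym φ hφ FA Fsym hFA hFsym
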